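/- Let m > 0, let O, ω : ℝ → ℝ³ be differentiable with O'(t) = v_O(t), and define the generalized potential U₂(t,x,v) = m (ω(t) × (x − O(t))) · v on ℝ × ℝ³ × ℝ³. Then for every twice differentiable curve x : ℝ → ℝ³ and every t ∈ ℝ, ∇_x U₂(t, x(t), ẋ(t)) − d/dt [∇_v U₂(t, x(t), ẋ(t))] = −2m ω(t) × ẋ(t) − m ω'(t) × (x(t) − O(t)) − m v_O(t) × ω(t), where ∇_x and ∇_v denote gradients with respect to the position and velocity arguments. -/

import Mathlib

noncomputable section
open scoped RealInnerProductSpace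

/-- Euclidean 3-space. -/
abbrev E3 : Type := EuclideanSpace ℝ (Fin 3)

/-- Constructor for vectors in `E3` from three coordinates. -/
def vec3 (a b c : ℝ) : E3 := (WithLp.equiv 2 (Fin 3 → ℝ)).symm ![a, b, c]

/-- The cross product on `E3`. -/
def cross3 (a b : E3) : E3 :=
  vec3 (a 1 * b 2 - a 2 * b 1) (a 2 * b 0 - a 0 * b 2) (a 0 * b 1 - a 1 * b 0)

/-- `pderiv3 F j x i` is the partial derivative `∂_j F_i` at `x`. -/
def pderiv3 (F : E3 → E3) (j : Fin 3) (x : E3) (i : Fin 3) : ℝ :=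
  fderiv ℝ F x (EuclideanSpace.single j 1) i

/-- The curl `∇ × F` of a vector field on `E3`:
`(∇×F)_1 = ∂_2 F_3 − ∂_3 F_2`, `(∇×F)_2 = ∂_3 F_1 − ∂_1 F_3`, `(∇×F)_3 = ∂_1 F_2 − ∂_2 F_1`
(written here with 0-based indices). -/
def curl3 (F : E3 → E3) (x : E3) : E3 :=
  vec3 (pderiv3 F 1 x 2 - pderiv3 F 2 x 1)
       (pderiv3 F 2 x 0 - pderiv3 F 0 x 2)
       (pderiv3 F 0 x 1 - pderiv3 F 1 x 0)

/-- The divergence `∇ · F = ∂_1 F_1 + ∂_2 F_2 + ∂_3 F_3` of a vector field on `E3`. -/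
def div3 (F : E3 → E3) (x : E3) : ℝ :=
  pderiv3 F 0 x 0 + pderiv3 F 1 x 1 + pderiv3 F 2 x 2

/-!
By the scalar triple product, `U₂(t, x, v) = m (v × ω) · (x − O)`, so `∇ₓU₂ = m v × ω`. The
velocity gradient `∇ᵥU₂ = m ω × (x − O)` is bilinear in `ω` and `x − O`, so along the curve
its time derivative is `m (ω' × (x − O) + ω × (ẋ − v_O))`. Anticommutativity of `×` turns
`m ẋ × ω − m ω × ẋ` into the Coriolis term `−2m ω × ẋ` and `m ω × v_O` into `−m v_O × ω`.
-/

open Matrix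

lemma cross3_eq_crossProduct (a b : E3) : cross3 a b = WithLp.toLp 2 (a.ofLp ⨯₃ b.ofLp) := by
  ext i; fin_cases i <;> simp [cross3, vec3, cross_apply]

lemma real_inner_eq_dotProduct (a b : E3) : ⟪a, b⟫ = a.ofLp ⬝ᵥ b.ofLp := by
  simp [EuclideanSpace.inner_eq_star_dotProduct, dotProduct_comm]

lemma cross3_anticomm (a b : E3) : cross3 b a = -cross3 a b := by
  rw [cross3_eq_crossProduct, cross3_eq_crossProduct, ← cross_anticomm, WithLp.toLp_neg]

lemma inner_cross3_left (a b c : E3) : ⟪cross3 a b, c⟫ = ⟪b, cross3 c a⟫ := by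
  simp only [real_inner_eq_dotProduct, cross3_eq_crossProduct]
  rw [dotProduct_comm, triple_product_permutation, triple_product_permutation]

def cross3L : E3 →L[ℝ] E3 →L[ℝ] E3 :=
  let e := WithLp.linearEquiv 2 ℝ (Fin 3 → ℝ)
  ((crossProduct.compl₁₂ e.toLinearMap e.toLinearMap).compr₂
    e.symm.toLinearMap).toContinuousBilinearMap

@[simp] lemma cross3L_apply (a b : E3) : cross3L a b = cross3 a b := by
  simp [cross3L, cross3_eq_crossProduct]

lemma cross3_sub_right (a b c : E3) : cross3 a (b - c) = cross3 a b - cross3 a c := by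
  simp only [← cross3L_apply, map_sub]

lemma HasDerivAt.cross3 {f g : ℝ → E3} {f' g' : E3} {t : ℝ}
    (hf : HasDerivAt f f' t) (hg : HasDerivAt g g' t) :
    HasDerivAt (fun s => _root_.cross3 (f s) (g s))
      (_root_.cross3 f' (g t) + _root_.cross3 (f t) g') t := by
  simpa only [cross3L_apply, add_comm] using cross3L.hasDerivAt_of_bilinear (fun _ => hf) (fun _ => hg)

lemma hasGradientAt_const_mul_inner_sub {F : Type*} [NormedAddCommGroup F]
    [InnerProductSpace ℝ F] [CompleteSpace F] (m : ℝ) (c p y : F) :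
    HasGradientAt (fun x => m * ⟪c, x - p⟫) (m • c) y := by
  rw [hasGradientAt_iff_hasFDerivAt]
  exact (((m • innerSL ℝ c).hasFDerivAt).comp y ((hasFDerivAt_id y).sub_const p)).congr_fderiv
    (by ext; simp)

lemma hasGradientAt_inner_cross3_sub (m : ℝ) (a p v y : E3) :
    HasGradientAt (fun x => m * ⟪cross3 a (x - p), v⟫) (m • cross3 v a) y := by
  simpa only [inner_cross3_left, real_inner_comm (cross3 v a)]
    using hasGradientAt_const_mul_inner_sub m (cross3 v a) p y

theorem EL_force_of_U2_general (m : ℝ) (O vO ω : ℝ → E3)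
    (hO : Differentiable ℝ O) (hω : Differentiable ℝ ω)
    (hO' : ∀ t, deriv O t = vO t)
    (U2 : ℝ → E3 → E3 → ℝ)
    (hU2 : ∀ t x v, U2 t x v = m * ⟪cross3 (ω t) (x - O t), v⟫)
    (x : ℝ → E3) (hx : Differentiable ℝ x) (t : ℝ) :
    gradient (fun y => U2 t y (deriv x t)) (x t)
        - deriv (fun s => gradient (fun w => U2 s (x s) w) (deriv x s)) t
      = -((2 * m) • cross3 (ω t) (deriv x t))
        - m • cross3 (deriv ω t) (x t - O t)
        - m • cross3 (vO t) (ω t) := by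
  have hpos : HasGradientAt (fun y => U2 t y (deriv x t)) (m • cross3 (deriv x t) (ω t)) (x t) := by
    simpa only [hU2] using hasGradientAt_inner_cross3_sub m (ω t) (O t) (deriv x t) (x t)
  have hvel : ∀ s, gradient (fun w => U2 s (x s) w) (deriv x s) = m • cross3 (ω s) (x s - O s) :=
    fun s => by
      simpa only [hU2, sub_zero] using
        (hasGradientAt_const_mul_inner_sub m (cross3 (ω s) (x s - O s)) 0 (deriv x s)).gradient
  have hmom : HasDerivAt (fun s => m • cross3 (ω s) (x s - O s))
      (m • (cross3 (deriv ω t) (x t - O t) + cross3 (ω t) (deriv x t - vO t))) t := by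
    rw [← hO' t]
    exact ((hω t).hasDerivAt.cross3 ((hx t).hasDerivAt.sub (hO t).hasDerivAt)).const_smul m
  rw [hpos.gradient, funext hvel, hmom.deriv, cross3_sub_right (ω t),
    cross3_anticomm (ω t) (deriv x t), cross3_anticomm (ω t) (vO t)]
  module

/-- The velocity-coupled potential `U₂(t,x,v) = m (ω × (x − O)) · v` alone
produces, via the Euler–Lagrange combination `∇ₓU₂ − d/dt(∇ᵥU₂)` along a twice
differentiable curve, the force `−2m ω × ẋ − m ω' × (x − O) − m v_O × ω`. -/
theorem EL_force_of_U2 (m : ℝ) (hm : 0 < m) (O vO ω : ℝ → E3)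
    (hO : Differentiable ℝ O) (hω : Differentiable ℝ ω)
    (hO' : ∀ t, deriv O t = vO t)
    (U2 : ℝ → E3 → E3 → ℝ)
    (hU2 : ∀ t x v, U2 t x v = m * ⟪cross3 (ω t) (x - O t), v⟫)
    (x : ℝ → E3) (hx : Differentiable ℝ x) (hx' : Differentiable ℝ (deriv x)) (t : ℝ) :
    gradient (fun y => U2 t y (deriv x t)) (x t)
        - deriv (fun s => gradient (fun w => U2 s (x s) w) (deriv x s)) t
      = -((2 * m) • cross3 (ω t) (deriv x t))
        - m • cross3 (deriv ω t) (x t - O t)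
        - m • cross3 (vO t) (ω t) :=
  EL_force_of_U2_general m O vO ω hO hω hO' U2 hU2 x hx t
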